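/- Let N be a positive integer, let S0, S1 be independent random variables on a probability space with values in finite nonempty sets, let a_1, …, a_N and b be nonnegative reals with H(S0) = a_1 + ⋯ + a_N and H(S1) = b, and let U_1, …, U_N, V be random variables with values in finite nonempty sets such that: H(U_i | S0) = 0 and H(U_i) ≤ a_i for each i, H(V | S1) = 0 and H(V) ≤ b, and H(S0, S1 | U_1, …, U_N, V) = 0. Then H(U_i) = a_i for every i, H(V) = b, and H(U_1, …, U_N, V) = a_1 + ⋯ + a_N + b (so U_1, …, U_N, V are mutually independent). -/

import Mathlib

/-!
Independence gives `H(S₀, S₁) = ∑ aᵢ + b`. Since `(S₀, S₁)` is determined by `W = (U₁, …, U_N, V)`,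
`H(S₀, S₁) ≤ H(W)`, while subadditivity of entropy (Gibbs' inequality against the product of
the marginals) and the capacity bounds give `H(W) ≤ ∑ H(Uᵢ) + H(V) ≤ ∑ aᵢ + b`. The chain is
therefore tight, which forces every capacity bound to be an equality.
-/

open MeasureTheory ProbabilityTheory

/-- Shannon entropy (natural logarithm) of a random variable with values in a finite type,
computed from the law `μ.map X`. -/
noncomputable def ent {Ω : Type*} [MeasurableSpace Ω] {S : Type*} [Fintype S] [MeasurableSpace S]
    (μ : Measure Ω) (X : Ω → S) : ℝ :=
  ∑ s : S, Real.negMulLog ((μ.map X) {s}).toReal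

/-- Conditional entropy `H(X | Y) = H(X, Y) - H(Y)`. -/
noncomputable def condEnt {Ω S T : Type*} [MeasurableSpace Ω] [Fintype S] [MeasurableSpace S]
    [Fintype T] [MeasurableSpace T] (μ : Measure Ω) (X : Ω → S) (Y : Ω → T) : ℝ :=
  ent μ (fun ω => (X ω, Y ω)) - ent μ Y

/-- Mutual information `I(X ; Y) = H(X) + H(Y) - H(X, Y)`. -/
noncomputable def mutInfo {Ω S T : Type*} [MeasurableSpace Ω] [Fintype S] [MeasurableSpace S]
    [Fintype T] [MeasurableSpace T] (μ : Measure Ω) (X : Ω → S) (Y : Ω → T) : ℝ :=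
  ent μ X + ent μ Y - ent μ (fun ω => (X ω, Y ω))

/-- Conditional mutual information `I(X ; Y | Z) = H(X | Z) + H(Y | Z) - H(X, Y | Z)`. -/
noncomputable def condMutInfo {Ω S T U : Type*} [MeasurableSpace Ω] [Fintype S] [MeasurableSpace S]
    [Fintype T] [MeasurableSpace T] [Fintype U] [MeasurableSpace U]
    (μ : Measure Ω) (X : Ω → S) (Y : Ω → T) (Z : Ω → U) : ℝ :=
  condEnt μ X Z + condEnt μ Y Z - condEnt μ (fun ω => (X ω, Y ω)) Z

open Real Finset

namespace Real

lemma negMulLog_add_le {x y : ℝ} (hx : 0 ≤ x) (hy : 0 ≤ y) :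
    negMulLog (x + y) ≤ negMulLog x + negMulLog y := by
  rcases hx.eq_or_lt with rfl | hx
  · simp
  rcases hy.eq_or_lt with rfl | hy
  · simp
  have hlx := mul_le_mul_of_nonneg_left (log_le_log hx (le_add_of_nonneg_right hy.le)) hx.le
  have hly := mul_le_mul_of_nonneg_left (log_le_log hy (le_add_of_nonneg_left hx.le)) hy.le
  simp only [negMulLog, neg_mul, add_mul]
  linarith

lemma negMulLog_sum_le {ι : Type*} {s : Finset ι} {f : ι → ℝ} (hf : ∀ i ∈ s, 0 ≤ f i) :
    negMulLog (∑ i ∈ s, f i) ≤ ∑ i ∈ s, negMulLog (f i) :=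
  Finset.le_sum_of_subadditive_on_pred negMulLog (0 ≤ ·) negMulLog_zero.le
    (fun _ _ => negMulLog_add_le) (fun _ _ => add_nonneg) f hf

lemma negMulLog_add_mul_log_le {p q : ℝ} (hp : 0 ≤ p) (hq : 0 ≤ q) (hpq : q = 0 → p = 0) :
    negMulLog p + p * log q ≤ q - p := by
  rcases hp.eq_or_lt with rfl | hp
  · simpa using hq
  have hq : 0 < q := hq.lt_of_ne fun h => hp.ne' (hpq h.symm)
  have hlog := mul_le_mul_of_nonneg_left (log_le_sub_one_of_pos (div_pos hq hp)) hp.le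
  rw [log_div hq.ne' hp.ne', mul_sub_one, mul_div_cancel₀ _ hp.ne'] at hlog
  simp only [negMulLog, neg_mul]
  linarith

lemma sum_negMulLog_le_sum_neg_mul_log {ι : Type*} {s : Finset ι} {p q : ι → ℝ}
    (hp : ∀ i ∈ s, 0 ≤ p i) (hq : ∀ i ∈ s, 0 ≤ q i) (hsum : ∑ i ∈ s, q i ≤ ∑ i ∈ s, p i)
    (hpq : ∀ i ∈ s, q i = 0 → p i = 0) :
    ∑ i ∈ s, negMulLog (p i) ≤ ∑ i ∈ s, -(p i * log (q i)) := by
  have h := Finset.sum_le_sum fun i hi => negMulLog_add_mul_log_le (hp i hi) (hq i hi) (hpq i hi)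
  rw [Finset.sum_add_distrib, Finset.sum_sub_distrib] at h
  rw [Finset.sum_neg_distrib]
  linarith

end Real

namespace MeasureTheory

noncomputable def measureEnt {S : Type*} [Fintype S] [MeasurableSpace S] (ν : Measure S) : ℝ :=
  ∑ s : S, negMulLog (ν.real {s})

lemma ent_eq_measureEnt_map {Ω S : Type*} [MeasurableSpace Ω] [Fintype S] [MeasurableSpace S]
    (μ : Measure Ω) (X : Ω → S) : ent μ X = measureEnt (μ.map X) := rfl

variable {S T : Type*} [Fintype S] [MeasurableSpace S] [MeasurableSingletonClass S]
  [MeasurableSpace T] [MeasurableSingletonClass T]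

lemma map_measureReal_singleton [DecidableEq T] (ν : Measure S) [IsFiniteMeasure ν]
    (f : S → T) (t : T) : (ν.map f).real {t} = ∑ s with f s = t, ν.real {s} := by
  rw [sum_measureReal_singleton, map_measureReal_apply (measurable_of_finite f)
    (measurableSet_singleton t)]
  congr 1
  ext s
  simp

lemma map_fst_measureReal_singleton [Fintype T] (ν : Measure (S × T)) [IsFiniteMeasure ν] (s : S) :
    (ν.map Prod.fst).real {s} = ∑ t, ν.real {(s, t)} := by
  classical
  rw [map_measureReal_singleton, Finset.sum_filter, Fintype.sum_prod_type, Finset.sum_comm]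
  simp

lemma map_snd_measureReal_singleton [Fintype T] (ν : Measure (S × T)) [IsFiniteMeasure ν] (t : T) :
    (ν.map Prod.snd).real {t} = ∑ s, ν.real {(s, t)} := by
  classical
  rw [map_measureReal_singleton, Finset.sum_filter, Fintype.sum_prod_type_right, Finset.sum_comm]
  simp

lemma measureEnt_map_le [Fintype T] (ν : Measure S) [IsFiniteMeasure ν] (f : S → T) :
    measureEnt (ν.map f) ≤ measureEnt ν := by
  classical
  calc measureEnt (ν.map f) = ∑ t, negMulLog (∑ s with f s = t, ν.real {s}) := by
        simp only [measureEnt, map_measureReal_singleton]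
    _ ≤ ∑ t, ∑ s with f s = t, negMulLog (ν.real {s}) :=
        Finset.sum_le_sum fun _ _ => negMulLog_sum_le fun _ _ => measureReal_nonneg
    _ = measureEnt ν := Finset.sum_fiberwise _ f _

lemma measureEnt_prod [Fintype T] (ν : Measure S) (ν' : Measure T) [IsProbabilityMeasure ν]
    [IsProbabilityMeasure ν'] : measureEnt (ν.prod ν') = measureEnt ν + measureEnt ν' := by
  simp only [measureEnt, Fintype.sum_prod_type, ← Set.singleton_prod_singleton,
    measureReal_prod_prod, negMulLog_mul, Finset.sum_add_distrib, ← Finset.sum_mul,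
    ← Finset.mul_sum, sum_measureReal_singleton, coe_univ, probReal_univ]
  ring

lemma measureEnt_le_map_fst_add_map_snd [Fintype T] (ν : Measure (S × T)) [IsProbabilityMeasure ν] :
    measureEnt ν ≤ measureEnt (ν.map Prod.fst) + measureEnt (ν.map Prod.snd) := by
  set p : S × T → ℝ := fun z => ν.real {z}
  set pX : S → ℝ := fun s => (ν.map Prod.fst).real {s}
  set pY : T → ℝ := fun t => (ν.map Prod.snd).real {t}
  have hpX : ∀ s, pX s = ∑ t, p (s, t) := map_fst_measureReal_singleton ν
  have hpY : ∀ t, pY t = ∑ s, p (s, t) := map_snd_measureReal_singleton ν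
  have hp_le_pX : ∀ z, p z ≤ pX z.1 := fun z => by
    rw [hpX]; exact Finset.single_le_sum (f := fun t => p (z.1, t)) (fun _ _ => measureReal_nonneg)
      (mem_univ z.2)
  have hp_le_pY : ∀ z, p z ≤ pY z.2 := fun z => by
    rw [hpY]; exact Finset.single_le_sum (f := fun s => p (s, z.2)) (fun _ _ => measureReal_nonneg)
      (mem_univ z.1)
  have hp_eq_zero : ∀ z, pX z.1 * pY z.2 = 0 → p z = 0 := fun z h => by
    rcases mul_eq_zero.mp h with h | h
    · exact le_antisymm (h ▸ hp_le_pX z) measureReal_nonneg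
    · exact le_antisymm (h ▸ hp_le_pY z) measureReal_nonneg
  have htotal : ∑ z, p z = 1 := by simp [p]
  have hX_total : ∑ s, pX s = 1 := by simp only [hpX, ← Fintype.sum_prod_type, htotal]
  have hY_total : ∑ t, pY t = 1 := by simp only [hpY, ← Fintype.sum_prod_type_right, htotal]
  have hsum : ∑ z : S × T, pX z.1 * pY z.2 = ∑ z, p z := by
    rw [Fintype.sum_prod_type, ← Finset.sum_mul_sum, hX_total, hY_total, htotal, one_mul]
  have hsplit : ∀ z, -(p z * log (pX z.1 * pY z.2))
      = -(p z * log (pX z.1)) + -(p z * log (pY z.2)) := fun z => by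
    by_cases hz : p z = 0
    · simp [hz]
    rw [log_mul (fun h => hz (hp_eq_zero z (by simp [h])))
      (fun h => hz (hp_eq_zero z (by simp [h])))]
    ring
  have hcrossX : ∑ z : S × T, -(p z * log (pX z.1)) = ∑ s, negMulLog (pX s) := by
    rw [Fintype.sum_prod_type]
    refine Finset.sum_congr rfl fun s _ => ?_
    simp only [Finset.sum_neg_distrib, ← Finset.sum_mul, ← hpX, negMulLog, neg_mul]
  have hcrossY : ∑ z : S × T, -(p z * log (pY z.2)) = ∑ t, negMulLog (pY t) := by
    rw [Fintype.sum_prod_type_right]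
    refine Finset.sum_congr rfl fun t _ => ?_
    simp only [Finset.sum_neg_distrib, ← Finset.sum_mul, ← hpY, negMulLog, neg_mul]
  calc measureEnt ν = ∑ z, negMulLog (p z) := rfl
    _ ≤ ∑ z : S × T, -(p z * log (pX z.1 * pY z.2)) :=
      sum_negMulLog_le_sum_neg_mul_log (fun _ _ => measureReal_nonneg)
        (fun _ _ => mul_nonneg measureReal_nonneg measureReal_nonneg) hsum.le
        (fun z _ => hp_eq_zero z)
    _ = measureEnt (ν.map Prod.fst) + measureEnt (ν.map Prod.snd) := by
      rw [Finset.sum_congr rfl fun z _ => hsplit z, Finset.sum_add_distrib, hcrossX, hcrossY]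
      rfl

end MeasureTheory

lemma ent_eq_zero_of_subsingleton {Ω S : Type*} [MeasurableSpace Ω] {μ : Measure Ω}
    [IsProbabilityMeasure μ] [Fintype S] [Subsingleton S] [MeasurableSpace S] {X : Ω → S}
    (hX : Measurable X) : ent μ X = 0 := by
  have := Measure.isProbabilityMeasure_map (μ := μ) hX.aemeasurable
  rw [ent_eq_measureEnt_map, measureEnt]
  refine Finset.sum_eq_zero fun s _ => ?_
  rw [Subsingleton.eq_univ_of_nonempty (Set.singleton_nonempty s), probReal_univ, negMulLog_one]

section Entropy

variable {Ω : Type*} [MeasurableSpace Ω] {μ : Measure Ω}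
  {S T : Type*} [Fintype S] [MeasurableSpace S] [MeasurableSingletonClass S]
  [Fintype T] [MeasurableSpace T] [MeasurableSingletonClass T] {X : Ω → S} {Y : Ω → T}

lemma ent_comp_le [IsFiniteMeasure μ] (hX : Measurable X) (f : S → T) :
    ent μ (fun ω => f (X ω)) ≤ ent μ X := by
  have hmap : (μ.map X).map f = μ.map (fun ω => f (X ω)) :=
    Measure.map_map (measurable_of_finite f) hX
  rw [ent_eq_measureEnt_map, ent_eq_measureEnt_map, ← hmap]
  exact measureEnt_map_le _ f

lemma ent_le_of_condEnt_eq_zero [IsFiniteMeasure μ] (hX : Measurable X) (hY : Measurable Y)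
    (h : condEnt μ X Y = 0) : ent μ X ≤ ent μ Y := by
  rw [condEnt, sub_eq_zero] at h
  exact (ent_comp_le (hX.prodMk hY) Prod.fst).trans h.le

variable [IsProbabilityMeasure μ]

lemma ent_pair_le_add (hX : Measurable X) (hY : Measurable Y) :
    ent μ (fun ω => (X ω, Y ω)) ≤ ent μ X + ent μ Y := by
  have := Measure.isProbabilityMeasure_map (μ := μ) (hX.prodMk hY).aemeasurable
  have hfst : (μ.map fun ω => (X ω, Y ω)).map Prod.fst = μ.map X :=
    Measure.map_map measurable_fst (hX.prodMk hY)
  have hsnd : (μ.map fun ω => (X ω, Y ω)).map Prod.snd = μ.map Y :=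
    Measure.map_map measurable_snd (hX.prodMk hY)
  simpa only [ent_eq_measureEnt_map, hfst, hsnd] using
    measureEnt_le_map_fst_add_map_snd (μ.map fun ω => (X ω, Y ω))

lemma ProbabilityTheory.IndepFun.ent_pair_eq_add (h : IndepFun X Y μ) (hX : Measurable X)
    (hY : Measurable Y) :
    ent μ (fun ω => (X ω, Y ω)) = ent μ X + ent μ Y := by
  have := Measure.isProbabilityMeasure_map (μ := μ) hX.aemeasurable
  have := Measure.isProbabilityMeasure_map (μ := μ) hY.aemeasurable
  rw [ent_eq_measureEnt_map, ent_eq_measureEnt_map, ent_eq_measureEnt_map,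
    (indepFun_iff_map_prod_eq_prod_map_map hX.aemeasurable hY.aemeasurable).mp h]
  exact measureEnt_prod _ _

lemma ent_pi_le_sum {N : ℕ} {TT : Fin N → Type*} [∀ i, Fintype (TT i)]
    [∀ i, MeasurableSpace (TT i)] [∀ i, MeasurableSingletonClass (TT i)] {W : ∀ i, Ω → TT i}
    (hW : ∀ i, Measurable (W i)) : ent μ (fun ω i => W i ω) ≤ ∑ i, ent μ (W i) := by
  induction N with
  | zero => simp [ent_eq_zero_of_subsingleton (measurable_pi_lambda _ hW)]
  | succ n ih =>
    have hW' : Measurable fun ω (i : Fin n) => W i.succ ω := measurable_pi_lambda _ fun i => hW _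
    have hcons : (fun ω i => W i ω) = fun ω => Fin.consEquiv TT (W 0 ω, fun i => W i.succ ω) :=
      funext fun ω => (Fin.cons_self_tail _).symm
    calc ent μ (fun ω i => W i ω)
        ≤ ent μ (fun ω => (W 0 ω, fun i : Fin n => W i.succ ω)) :=
          hcons ▸ ent_comp_le ((hW 0).prodMk hW') (Fin.consEquiv TT)
      _ ≤ ent μ (W 0) + ent μ (fun ω (i : Fin n) => W i.succ ω) := ent_pair_le_add (hW 0) hW'
      _ ≤ ent μ (W 0) + ∑ i : Fin n, ent μ (W i.succ) := add_le_add_right (ih fun i => hW _) _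
      _ = ∑ i, ent μ (W i) := (Fin.sum_univ_succ fun i => ent μ (W i)).symm

end Entropy

theorem stmt_12_general
    {Ω : Type*} [MeasurableSpace Ω] (μ : Measure Ω) [IsProbabilityMeasure μ]
    (N : ℕ)
    {T0 T1 : Type*}
    [Fintype T0] [MeasurableSpace T0] [MeasurableSingletonClass T0]
    [Fintype T1] [MeasurableSpace T1] [MeasurableSingletonClass T1]
    {TU : Fin N → Type*}
    [∀ i, Fintype (TU i)]
    [∀ i, MeasurableSpace (TU i)] [∀ i, MeasurableSingletonClass (TU i)]
    {TV : Type*}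
    [Fintype TV] [MeasurableSpace TV] [MeasurableSingletonClass TV]
    (S₀ : Ω → T0) (S₁ : Ω → T1) (U : ∀ i : Fin N, Ω → TU i) (V : Ω → TV)
    (hS₀ : Measurable S₀) (hS₁ : Measurable S₁)
    (hU : ∀ i, Measurable (U i)) (hV : Measurable V)
    (hindep : IndepFun S₀ S₁ μ)
    (a : Fin N → ℝ) (b : ℝ)
    (hS₀rate : ent μ S₀ = ∑ i, a i) (hS₁rate : ent μ S₁ = b)
    (hUcap : ∀ i, ent μ (U i) ≤ a i)
    (hVcap : ent μ V ≤ b)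
    (hdec : condEnt μ (fun ω => (S₀ ω, S₁ ω)) (fun ω => ((fun i => U i ω), V ω)) = 0) :
    (∀ i, ent μ (U i) = a i) ∧ ent μ V = b ∧
      ent μ (fun ω => ((fun i => U i ω), V ω)) = (∑ i, a i) + b := by
  have hUV : Measurable fun ω => ((fun i => U i ω), V ω) := (measurable_pi_lambda _ hU).prodMk hV
  have hsource : ent μ (fun ω => (S₀ ω, S₁ ω)) = (∑ i, a i) + b := by
    rw [hindep.ent_pair_eq_add hS₀ hS₁, hS₀rate, hS₁rate]
  have hlower : (∑ i, a i) + b ≤ ent μ (fun ω => ((fun i => U i ω), V ω)) :=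
    hsource ▸ ent_le_of_condEnt_eq_zero (hS₀.prodMk hS₁) hUV hdec
  have hupper : ent μ (fun ω => ((fun i => U i ω), V ω)) ≤ (∑ i, ent μ (U i)) + ent μ V :=
    (ent_pair_le_add (measurable_pi_lambda _ hU) hV).trans (add_le_add_left (ent_pi_le_sum hU) _)
  have hUsum : ∑ i, ent μ (U i) ≤ ∑ i, a i := Finset.sum_le_sum fun i _ => hUcap i
  have hUeq : ∑ i, ent μ (U i) = ∑ i, a i := by linarith
  exact ⟨fun i => (Finset.sum_eq_sum_iff_of_le fun i _ => hUcap i).mp hUeq i (mem_univ i),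
    by linarith, by linarith⟩

theorem stmt_12
    {Ω : Type*} [MeasurableSpace Ω] (μ : Measure Ω) [IsProbabilityMeasure μ]
    (N : ℕ) (hN : 0 < N)
    {T0 T1 : Type*}
    [Fintype T0] [Nonempty T0] [MeasurableSpace T0] [MeasurableSingletonClass T0]
    [Fintype T1] [Nonempty T1] [MeasurableSpace T1] [MeasurableSingletonClass T1]
    {TU : Fin N → Type*}
    [∀ i, Fintype (TU i)] [∀ i, Nonempty (TU i)]
    [∀ i, MeasurableSpace (TU i)] [∀ i, MeasurableSingletonClass (TU i)]
    {TV : Type*}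
    [Fintype TV] [Nonempty TV] [MeasurableSpace TV] [MeasurableSingletonClass TV]
    (S₀ : Ω → T0) (S₁ : Ω → T1) (U : ∀ i : Fin N, Ω → TU i) (V : Ω → TV)
    (hS₀ : Measurable S₀) (hS₁ : Measurable S₁)
    (hU : ∀ i, Measurable (U i)) (hV : Measurable V)
    (hindep : IndepFun S₀ S₁ μ)
    (a : Fin N → ℝ) (b : ℝ) (ha : ∀ i, 0 ≤ a i) (hb : 0 ≤ b)
    (hS₀rate : ent μ S₀ = ∑ i, a i) (hS₁rate : ent μ S₁ = b)
    (hUfun : ∀ i, condEnt μ (U i) S₀ = 0) (hUcap : ∀ i, ent μ (U i) ≤ a i)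
    (hVfun : condEnt μ V S₁ = 0) (hVcap : ent μ V ≤ b)
    (hdec : condEnt μ (fun ω => (S₀ ω, S₁ ω)) (fun ω => ((fun i => U i ω), V ω)) = 0) :
    (∀ i, ent μ (U i) = a i) ∧ ent μ V = b ∧
      ent μ (fun ω => ((fun i => U i ω), V ω)) = (∑ i, a i) + b :=
  stmt_12_general μ N S₀ S₁ U V hS₀ hS₁ hU hV hindep a b hS₀rate hS₁rate hUcap hVcap hdec
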